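/- arXiv:1409.7851 — 4 statements merged into one kernel-verified Lean document; each statement's English description precedes it below -/
import Mathlib

section
/- Strong quasitriangle inequality for relative excess: if A, B, C ⊆ ℝⁿ with B, C nonempty, x ∈ ℝⁿ, r > 0, and d^{x,r}(A,B) ≤ ε, then d^{x,r}(A,C) ≤ d^{x,r}(A,B) + (1+ε) d^{x,r(1+ε)}(closure(B), C). -/
open Metric Set Filter Topology Pointwise

noncomputable section

/-- Excess of `A` over `B`: `sup_{a ∈ A} inf_{b ∈ B} |a - b|` (extended-real valued). -/
def ex {n : ℕ} (A B : Set (EuclideanSpace ℝ (Fin n))) : ENNReal :=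
  ⨆ a ∈ A, EMetric.infEdist a B

/-- Relative excess of `A` in the closed ball `B(x,r)` over `B`. -/
def relEx {n : ℕ} (x : EuclideanSpace ℝ (Fin n)) (r : ℝ)
    (A B : Set (EuclideanSpace ℝ (Fin n))) : ℝ :=
  (ex (A ∩ closedBall x r) B).toReal / r

/-- Relative Walkup–Wets distance in `B(x,r)`. -/
def WW {n : ℕ} (x : EuclideanSpace ℝ (Fin n)) (r : ℝ)
    (A B : Set (EuclideanSpace ℝ (Fin n))) : ℝ :=
  max (relEx x r A B) (relEx x r B A)

/-!
Let `S = A ∩ B(x,r)`. Every `a ∈ S` has a nearest point `b` in `closure B`, at distance at most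
`ex(S, B) ≤ r ε`, so `b` lies in `B(x, r(1+ε))`; hence `dist(a, C) ≤ dist(a, b) + dist(b, C)`
is at most `ex(S, B) + ex(closure B ∩ B(x, r(1+ε)), C)`. Dividing by `r` gives the claim, the
factor `1 + ε` compensating for the larger radius in the second relative excess.
-/

section Excess

variable {n : ℕ}

theorem infEDist_le_ex {A : Set (EuclideanSpace ℝ (Fin n))} (B : Set (EuclideanSpace ℝ (Fin n)))
    {a : EuclideanSpace ℝ (Fin n)} (ha : a ∈ A) : infEDist a B ≤ ex A B :=
  le_iSup₂ (f := fun a (_ : a ∈ A) => infEDist a B) a ha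

theorem ex_inter_closedBall_ne_top (A : Set (EuclideanSpace ℝ (Fin n)))
    {B : Set (EuclideanSpace ℝ (Fin n))} (x : EuclideanSpace ℝ (Fin n)) (R : ℝ)
    (hB : B.Nonempty) : ex (A ∩ closedBall x R) B ≠ ⊤ := by
  obtain ⟨b, hb⟩ := hB
  refine ne_top_of_le_ne_top (b := ENNReal.ofReal R + edist x b) (by finiteness) ?_
  refine iSup₂_le fun a ha => ?_
  calc infEDist a B ≤ edist a b := infEDist_le_edist_of_mem hb
    _ ≤ edist a x + edist x b := edist_triangle _ _ _
    _ ≤ ENNReal.ofReal R + edist x b := by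
        rw [edist_dist]
        gcongr
        exact ha.2

theorem ex_inter_closedBall_le_add (A C : Set (EuclideanSpace ℝ (Fin n)))
    {B : Set (EuclideanSpace ℝ (Fin n))} (x : EuclideanSpace ℝ (Fin n)) {r ρ : ℝ}
    (hB : B.Nonempty) (hρ : (ex (A ∩ closedBall x r) B).toReal ≤ ρ) :
    ex (A ∩ closedBall x r) C ≤
      ex (A ∩ closedBall x r) B + ex (closure B ∩ closedBall x (r + ρ)) C := by
  refine iSup₂_le fun a ha => ?_
  obtain ⟨b, hb, hab⟩ := exists_mem_closure_infDist_eq_dist hB a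
  have hab_le : dist a b ≤ (ex (A ∩ closedBall x r) B).toReal := by
    rw [← hab, infDist]
    exact ENNReal.toReal_mono (ex_inter_closedBall_ne_top A x r hB) (infEDist_le_ex B ha)
  have hbx : dist b x ≤ r + ρ := by
    linarith [dist_triangle_left b x a, mem_closedBall.mp ha.2]
  calc infEDist a C ≤ edist a b + infEDist b C := infEDist_le_edist_add_infEDist
    _ ≤ ex (A ∩ closedBall x r) B + ex (closure B ∩ closedBall x (r + ρ)) C := by
        gcongr
        · rw [edist_dist, ← ENNReal.ofReal_toReal (ex_inter_closedBall_ne_top A x r hB)]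
          exact ENNReal.ofReal_le_ofReal hab_le
        · exact infEDist_le_ex C ⟨hb, hbx⟩

theorem toReal_ex_inter_closedBall_le_add (A : Set (EuclideanSpace ℝ (Fin n)))
    {B C : Set (EuclideanSpace ℝ (Fin n))} (x : EuclideanSpace ℝ (Fin n)) {r ρ : ℝ}
    (hB : B.Nonempty) (hC : C.Nonempty) (hρ : (ex (A ∩ closedBall x r) B).toReal ≤ ρ) :
    (ex (A ∩ closedBall x r) C).toReal ≤
      (ex (A ∩ closedBall x r) B).toReal + (ex (closure B ∩ closedBall x (r + ρ)) C).toReal := by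
  have hSB := ex_inter_closedBall_ne_top A x r hB
  have hTC := ex_inter_closedBall_ne_top (closure B) x (r + ρ) hC
  rw [← ENNReal.toReal_add hSB hTC]
  exact ENNReal.toReal_mono (ENNReal.add_ne_top.2 ⟨hSB, hTC⟩)
    (ex_inter_closedBall_le_add A C x hB hρ)

end Excess

/-- Strong quasitriangle inequality for the relative excess. -/
theorem relEx_strong_quasitriangle {n : ℕ} (A B C : Set (EuclideanSpace ℝ (Fin n)))
    (hB : B.Nonempty) (hC : C.Nonempty) (x : EuclideanSpace ℝ (Fin n)) (r : ℝ) (hr : 0 < r)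
    (ε : ℝ) (hε : relEx x r A B ≤ ε) :
    relEx x r A C ≤ relEx x r A B + (1 + ε) * relEx x (r * (1 + ε)) (closure B) C := by
  have hε0 : 0 ≤ ε := (div_nonneg ENNReal.toReal_nonneg hr.le).trans hε
  have hSB : (ex (A ∩ closedBall x r) B).toReal ≤ r * ε := by
    rwa [relEx, div_le_iff₀ hr, mul_comm] at hε
  have key := toReal_ex_inter_closedBall_le_add A x hB hC hSB
  rw [show r + r * ε = r * (1 + ε) by ring] at key
  have hscale (t : ℝ) : (1 + ε) * (t / (r * (1 + ε))) = t / r := by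
    field_simp
  rw [relEx, relEx, relEx, hscale, ← add_div]
  gcongr
end
end

section
/- Monotonicity of the relative Walkup-Wets distance: if A, B ⊆ ℝⁿ are nonempty and B(x,r) ⊆ B(y,s), then D^{x,r}[A,B] ≤ (s/r) D^{y,s}[A,B]. -/
open Metric Set Filter Topology Pointwise

noncomputable section

lemma Metric.nonneg_of_closedBall_subset_closedBall {α : Type*} [PseudoMetricSpace α]
    {x y : α} {r s : ℝ} (hr : 0 ≤ r) (h : closedBall x r ⊆ closedBall y s) : 0 ≤ s :=
  nonempty_closedBall.mp ((nonempty_closedBall.mpr hr).mono h)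

lemma Metric.le_of_closedBall_subset_closedBall {E : Type*} [NormedAddCommGroup E]
    [NormedSpace ℝ E] [Nontrivial E] {x y : E} {r s : ℝ} (hr : 0 ≤ r)
    (h : closedBall x r ⊆ closedBall y s) : r ≤ s := by
  have hs : 0 ≤ s := nonneg_of_closedBall_subset_closedBall hr h
  have : 2 * r ≤ 2 * s :=
    calc 2 * r = diam (closedBall x r) := (diam_closedBall_eq x hr).symm
      _ ≤ diam (closedBall y s) := diam_mono h isBounded_closedBall
      _ = 2 * s := diam_closedBall_eq y hs
  linarith

section Excess

variable {n : ℕ} {A A' B : Set (EuclideanSpace ℝ (Fin n))}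

lemma ex_mono_left (h : A ⊆ A') : ex A B ≤ ex A' B :=
  biSup_mono fun _ ha => h ha

lemma ex_ne_top_of_isBounded (hA : Bornology.IsBounded A) (hB : B.Nonempty) : ex A B ≠ ⊤ := by
  obtain ⟨b, hb⟩ := hB
  obtain ⟨R, hR⟩ := hA.subset_closedBall b
  refine ne_top_of_le_ne_top (ENNReal.ofReal_ne_top (r := R)) (iSup₂_le fun a ha => ?_)
  calc Metric.infEDist a B ≤ edist a b := Metric.infEDist_le_edist_of_mem hb
    _ ≤ ENNReal.ofReal R := by rw [edist_dist]; exact ENNReal.ofReal_le_ofReal (hR ha)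

lemma ex_eq_zero_of_subsingleton [Subsingleton (EuclideanSpace ℝ (Fin n))] (hB : B.Nonempty) :
    ex A B = 0 :=
  nonpos_iff_eq_zero.mp <| iSup₂_le fun a _ =>
    (Metric.infEDist_zero_of_mem (hB.eq_univ ▸ mem_univ a)).le

end Excess

lemma relEx_le_mul_relEx {n : ℕ} {x y : EuclideanSpace ℝ (Fin n)} {r s : ℝ}
    (C : Set (EuclideanSpace ℝ (Fin n))) {D : Set (EuclideanSpace ℝ (Fin n))}
    (hD : D.Nonempty) (hr : 0 < r) (hsub : closedBall x r ⊆ closedBall y s) :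
    relEx x r C D ≤ (s / r) * relEx y s C D := by
  rcases subsingleton_or_nontrivial (EuclideanSpace ℝ (Fin n)) with hE | hE
  · -- only for `n = 0`, where `s = 0 < r` is possible; but then every excess vanishes
    have hs : 0 ≤ s := nonneg_of_closedBall_subset_closedBall hr.le hsub
    rw [relEx, ex_eq_zero_of_subsingleton hD, ENNReal.toReal_zero, zero_div]
    exact mul_nonneg (div_nonneg hs hr.le) (div_nonneg ENNReal.toReal_nonneg hs)
  · have hs : 0 < s := hr.trans_le (le_of_closedBall_subset_closedBall hr.le hsub)
    have hfin : ex (C ∩ closedBall y s) D ≠ ⊤ :=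
      ex_ne_top_of_isBounded (isBounded_closedBall.subset inter_subset_right) hD
    calc relEx x r C D ≤ (ex (C ∩ closedBall y s) D).toReal / r := by
          unfold relEx
          gcongr ?_ / r
          exact ENNReal.toReal_mono hfin (ex_mono_left (inter_subset_inter_right C hsub))
      _ = (s / r) * relEx y s C D := by
          unfold relEx
          field_simp

/-- Monotonicity of the relative Walkup–Wets distance. -/
theorem WW_mono {n : ℕ} (A B : Set (EuclideanSpace ℝ (Fin n)))
    (hA : A.Nonempty) (hB : B.Nonempty) (x y : EuclideanSpace ℝ (Fin n)) (r s : ℝ)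
    (hr : 0 < r) (hsub : closedBall x r ⊆ closedBall y s) :
    WW x r A B ≤ (s / r) * WW y s A B := by
  have hs : 0 ≤ s := nonneg_of_closedBall_subset_closedBall hr.le hsub
  rw [WW, WW, mul_max_of_nonneg _ _ (div_nonneg hs hr.le)]
  exact max_le_max (relEx_le_mul_relEx A hB hr hsub) (relEx_le_mul_relEx B hA hr hsub)
end
end

section
/- If A_i → A in the Attouch-Wets sense and B ⊆ ℝⁿ is nonempty, then for all x ∈ ℝⁿ, r > 0, and ε > 0: D^{x,r}[A,B] ≤ (1+ε)·liminf_{i→∞} D^{x,(1+ε)r}[A_i, B]. -/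
open Metric Set Filter Topology Pointwise

noncomputable section

lemma le_ex {n : ℕ} {S B : Set (EuclideanSpace ℝ (Fin n))} {a : EuclideanSpace ℝ (Fin n)}
    (ha : a ∈ S) : EMetric.infEdist a B ≤ ex S B :=
  le_biSup (fun a => EMetric.infEdist a B) ha

lemma ex_ball_le {n : ℕ} {S B : Set (EuclideanSpace ℝ (Fin n))}
    {x b₀ : EuclideanSpace ℝ (Fin n)} {t : ℝ} (hb₀ : b₀ ∈ B) :
    ex (S ∩ closedBall x t) B ≤ edist x b₀ + ENNReal.ofReal t := by
  apply iSup₂_le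
  rintro a ⟨-, haK⟩
  calc EMetric.infEdist a B ≤ edist a b₀ := EMetric.infEdist_le_edist_of_mem hb₀
    _ ≤ edist a x + edist x b₀ := edist_triangle _ _ _
    _ ≤ ENNReal.ofReal t + edist x b₀ := by
        gcongr
        rw [edist_dist]
        exact ENNReal.ofReal_le_ofReal (mem_closedBall.mp haK)
    _ = edist x b₀ + ENNReal.ofReal t := add_comm _ _

lemma ex_ball_ne_top {n : ℕ} {S B : Set (EuclideanSpace ℝ (Fin n))}
    {x : EuclideanSpace ℝ (Fin n)} {t : ℝ} (hB : B.Nonempty) :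
    ex (S ∩ closedBall x t) B ≠ ⊤ := by
  obtain ⟨b₀, hb₀⟩ := hB
  exact ne_top_of_le_ne_top (by simp [edist_ne_top]) (ex_ball_le hb₀)

/-- Lower semicontinuity of the relative Walkup–Wets distance along
Attouch–Wets convergent sequences. -/
theorem WW_le_liminf {n : ℕ} (A : ℕ → Set (EuclideanSpace ℝ (Fin n)))
    (L B : Set (EuclideanSpace ℝ (Fin n)))
    (hA : ∀ i, (A i).Nonempty) (hAc : ∀ i, IsClosed (A i))
    (hL : L.Nonempty) (hLc : IsClosed L) (hB : B.Nonempty)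
    (hAW : ∀ r : ℝ, 0 < r →
        Tendsto (fun i => ex (A i ∩ closedBall 0 r) L) atTop (nhds 0) ∧
        Tendsto (fun i => ex (L ∩ closedBall 0 r) (A i)) atTop (nhds 0))
    (x : EuclideanSpace ℝ (Fin n)) (r : ℝ) (hr : 0 < r) (ε : ℝ) (hε : 0 < ε) :
    WW x r L B ≤ (1 + ε) * Filter.liminf (fun i => WW x ((1 + ε) * r) (A i) B) atTop := by
  obtain ⟨b₀, hb₀⟩ := hB
  obtain ⟨l₀, hl₀⟩ := hL
  set R : ℝ := (1 + ε) * r with hRdef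
  have hR : 0 < R := by positivity
  have hrR : r < R := by nlinarith
  set g : ℕ → ℝ := fun i => WW x R (A i) B with hg
  -- M : eventual bound on ex (B ∩ closedBall x R) (A i)
  set M : ℝ := dist x l₀ + 1 + R with hMdef
  have hM : 0 < M := by positivity
  have hρ₁ : (0:ℝ) < dist l₀ (0 : EuclideanSpace ℝ (Fin n)) + 1 := by positivity
  have hE1 : ∀ᶠ i in atTop, ∃ a₀ ∈ A i, dist l₀ a₀ < 1 := by
    filter_upwards [(hAW _ hρ₁).2.eventually_lt_const
      (show (0:ENNReal) < ENNReal.ofReal 1 by simp)] with i hi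
    have hmem : l₀ ∈ L ∩ closedBall (0 : EuclideanSpace ℝ (Fin n))
        (dist l₀ (0 : EuclideanSpace ℝ (Fin n)) + 1) := by
      refine ⟨hl₀, ?_⟩
      rw [mem_closedBall]
      linarith
    have h0 : EMetric.infEdist l₀ (A i) ≤
        ex (L ∩ closedBall (0 : EuclideanSpace ℝ (Fin n))
          (dist l₀ (0 : EuclideanSpace ℝ (Fin n)) + 1)) (A i) := le_ex hmem
    have h1 : EMetric.infEdist l₀ (A i) < ENNReal.ofReal 1 := lt_of_le_of_lt h0 hi
    obtain ⟨a₀, ha₀, he⟩ := EMetric.infEdist_lt_iff.mp h1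
    exact ⟨a₀, ha₀, edist_lt_ofReal.mp he⟩
  have hEe : ∀ᶠ i in atTop, ex (B ∩ closedBall x R) (A i) ≤ ENNReal.ofReal M := by
    filter_upwards [hE1] with i ⟨a₀, ha₀, hda₀⟩
    apply iSup₂_le
    rintro b ⟨hbB, hbK⟩
    calc EMetric.infEdist b (A i) ≤ edist b a₀ := EMetric.infEdist_le_edist_of_mem ha₀
      _ = ENNReal.ofReal (dist b a₀) := edist_dist _ _
      _ ≤ ENNReal.ofReal M := by
          apply ENNReal.ofReal_le_ofReal
          have h1 : dist b a₀ ≤ dist b x + dist x l₀ + dist l₀ a₀ := by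
            calc dist b a₀ ≤ dist b l₀ + dist l₀ a₀ := dist_triangle _ _ _
              _ ≤ dist b x + dist x l₀ + dist l₀ a₀ := by
                  linarith [dist_triangle b x l₀]
          have h2 := mem_closedBall.mp hbK
          rw [hMdef]; linarith
  -- core eventual estimate
  have key : ∀ δ : ℝ, 0 < δ → ∀ᶠ i in atTop, WW x r L B / (1 + ε) - δ ≤ g i := by
    intro δ hδ
    set δ' : ℝ := δ * R with hδ'def
    have hδ' : 0 < δ' := by positivity
    set η₁ : ℝ := min (δ' / 2) (ε * r) with hη₁def
    have hη₁ : 0 < η₁ := lt_min (by positivity) (by positivity)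
    have hρ : (0:ℝ) < dist x (0 : EuclideanSpace ℝ (Fin n)) + r := by positivity
    have hEa : ∀ᶠ i in atTop,
        ex (L ∩ closedBall x r) B ≤ ex (A i ∩ closedBall x R) B + ENNReal.ofReal η₁ := by
      filter_upwards [(hAW _ hρ).2.eventually_lt_const
        (show (0:ENNReal) < ENNReal.ofReal η₁ by simpa using hη₁)] with i hi
      apply iSup₂_le
      rintro a ⟨haL, haK⟩
      have haball : a ∈ closedBall (0 : EuclideanSpace ℝ (Fin n))
          (dist x (0 : EuclideanSpace ℝ (Fin n)) + r) := by
        rw [mem_closedBall]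
        have := mem_closedBall.mp haK
        linarith [dist_triangle a x (0 : EuclideanSpace ℝ (Fin n))]
      have h0 : EMetric.infEdist a (A i) ≤
          ex (L ∩ closedBall (0 : EuclideanSpace ℝ (Fin n))
            (dist x (0 : EuclideanSpace ℝ (Fin n)) + r)) (A i) := le_ex ⟨haL, haball⟩
      have h1 : EMetric.infEdist a (A i) < ENNReal.ofReal η₁ := lt_of_le_of_lt h0 hi
      obtain ⟨a', ha', he⟩ := EMetric.infEdist_lt_iff.mp h1
      have hda' : dist a a' < η₁ := edist_lt_ofReal.mp he
      have ha'K : a' ∈ closedBall x R := by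
        rw [mem_closedBall]
        have h2 := mem_closedBall.mp haK
        have h3 : η₁ ≤ ε * r := min_le_right _ _
        have := dist_triangle a' a x
        rw [dist_comm a' a] at this
        rw [hRdef]; nlinarith
      calc EMetric.infEdist a B ≤ edist a a' + EMetric.infEdist a' B :=
            EMetric.infEdist_le_edist_add_infEdist
        _ ≤ ENNReal.ofReal η₁ + ex (A i ∩ closedBall x R) B :=
            add_le_add he.le (le_ex ⟨ha', ha'K⟩)
        _ = ex (A i ∩ closedBall x R) B + ENNReal.ofReal η₁ := add_comm _ _
    set η₂ : ℝ := min (δ' / 2) 1 with hη₂def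
    have hη₂ : 0 < η₂ := lt_min (by positivity) one_pos
    have hη₂1 : η₂ ≤ 1 := min_le_right _ _
    have hρ₂ : (0:ℝ) < dist x (0 : EuclideanSpace ℝ (Fin n)) + R + (M + 1) := by positivity
    have hEb : ∀ᶠ i in atTop,
        ex (B ∩ closedBall x r) L ≤
          ex (B ∩ closedBall x R) (A i) + ENNReal.ofReal η₂ + ENNReal.ofReal η₂ := by
      filter_upwards [hEe, (hAW _ hρ₂).1.eventually_lt_const
        (show (0:ENNReal) < ENNReal.ofReal η₂ by simpa using hη₂)] with i hMi hLi
      apply iSup₂_le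
      rintro b ⟨hbB, hbK⟩
      have hbK' : b ∈ closedBall x R := closedBall_subset_closedBall hrR.le hbK
      obtain ⟨a₀, ha₀⟩ := hA i
      have hfin : ex (B ∩ closedBall x R) (A i) ≠ ⊤ :=
        ex_ball_ne_top ⟨a₀, ha₀⟩
      have h0 : EMetric.infEdist b (A i) ≤ ex (B ∩ closedBall x R) (A i) :=
        le_ex ⟨hbB, hbK'⟩
      have hne : ENNReal.ofReal η₂ ≠ 0 := by
        simp only [ne_eq, ENNReal.ofReal_eq_zero, not_le]
        exact hη₂
      have h1 : EMetric.infEdist b (A i) <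
          ex (B ∩ closedBall x R) (A i) + ENNReal.ofReal η₂ :=
        lt_of_le_of_lt h0 (ENNReal.lt_add_right hfin hne)
      obtain ⟨a, haAi, hae⟩ := EMetric.infEdist_lt_iff.mp h1
      have haM : dist b a < M + 1 := by
        have h2 : edist b a < ENNReal.ofReal (M + 1) := by
          refine lt_of_lt_of_le hae ?_
          calc ex (B ∩ closedBall x R) (A i) + ENNReal.ofReal η₂
              ≤ ENNReal.ofReal M + ENNReal.ofReal 1 :=
                add_le_add hMi (ENNReal.ofReal_le_ofReal hη₂1)
            _ = ENNReal.ofReal (M + 1) := (ENNReal.ofReal_add hM.le one_pos.le).symm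
        exact edist_lt_ofReal.mp h2
      have haρ : a ∈ closedBall (0 : EuclideanSpace ℝ (Fin n))
          (dist x (0 : EuclideanSpace ℝ (Fin n)) + R + (M + 1)) := by
        rw [mem_closedBall]
        have h3 := mem_closedBall.mp hbK'
        have h4 := dist_triangle a b (0 : EuclideanSpace ℝ (Fin n))
        have h5 := dist_triangle b x (0 : EuclideanSpace ℝ (Fin n))
        rw [dist_comm a b] at h4
        linarith
      calc EMetric.infEdist b L ≤ edist b a + EMetric.infEdist a L :=
            EMetric.infEdist_le_edist_add_infEdist
        _ ≤ (ex (B ∩ closedBall x R) (A i) + ENNReal.ofReal η₂) + ENNReal.ofReal η₂ := by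
            refine add_le_add hae.le ?_
            have h6 : EMetric.infEdist a L ≤
                ex (A i ∩ closedBall (0 : EuclideanSpace ℝ (Fin n))
                  (dist x (0 : EuclideanSpace ℝ (Fin n)) + R + (M + 1))) L :=
              le_ex ⟨haAi, haρ⟩
            exact le_trans h6 hLi.le
    filter_upwards [hEa, hEb] with i hia hib
    obtain ⟨a₀, ha₀⟩ := hA i
    -- finiteness
    have fLB : ex (L ∩ closedBall x r) B ≠ ⊤ := ex_ball_ne_top ⟨b₀, hb₀⟩
    have fBL : ex (B ∩ closedBall x r) L ≠ ⊤ := ex_ball_ne_top ⟨l₀, hl₀⟩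
    have fAiB : ex (A i ∩ closedBall x R) B ≠ ⊤ := ex_ball_ne_top ⟨b₀, hb₀⟩
    have fBAi : ex (B ∩ closedBall x R) (A i) ≠ ⊤ := ex_ball_ne_top ⟨a₀, ha₀⟩
    -- real versions
    have ta : (ex (L ∩ closedBall x r) B).toReal ≤
        (ex (A i ∩ closedBall x R) B).toReal + η₁ := by
      have := ENNReal.toReal_mono (by simp [fAiB]) hia
      rwa [ENNReal.toReal_add fAiB ENNReal.ofReal_ne_top,
        ENNReal.toReal_ofReal hη₁.le] at this
    have tb : (ex (B ∩ closedBall x r) L).toReal ≤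
        (ex (B ∩ closedBall x R) (A i)).toReal + η₂ + η₂ := by
      have := ENNReal.toReal_mono (by simp [fBAi]) hib
      rwa [ENNReal.toReal_add (by simp [fBAi]) ENNReal.ofReal_ne_top,
        ENNReal.toReal_add fBAi ENNReal.ofReal_ne_top,
        ENNReal.toReal_ofReal hη₂.le] at this
    -- bounds from g
    have hu : (ex (A i ∩ closedBall x R) B).toReal ≤ g i * R := by
      have h1 : (ex (A i ∩ closedBall x R) B).toReal / R ≤ g i := le_max_left _ _
      calc (ex (A i ∩ closedBall x R) B).toReal
          = (ex (A i ∩ closedBall x R) B).toReal / R * R := by field_simp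
        _ ≤ g i * R := by gcongr
    have hv : (ex (B ∩ closedBall x R) (A i)).toReal ≤ g i * R := by
      have h1 : (ex (B ∩ closedBall x R) (A i)).toReal / R ≤ g i := le_max_right _ _
      calc (ex (B ∩ closedBall x R) (A i)).toReal
          = (ex (B ∩ closedBall x R) (A i)).toReal / R * R := by field_simp
        _ ≤ g i * R := by gcongr
    -- conclude
    rw [sub_le_iff_le_add, div_le_iff₀ (by positivity : (0:ℝ) < 1 + ε)]
    rw [WW]
    apply max_le
    · rw [relEx, div_le_iff₀ hr]
      have hη₁' : η₁ ≤ δ' := le_trans (min_le_left _ _) (by linarith)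
      calc (ex (L ∩ closedBall x r) B).toReal ≤ g i * R + δ * R := by
            rw [hδ'def] at hη₁'; linarith
        _ = (g i + δ) * (1 + ε) * r := by rw [hRdef]; ring
    · rw [relEx, div_le_iff₀ hr]
      have hη₂' : η₂ + η₂ ≤ δ' := by
        have := min_le_left (δ' / 2) 1
        rw [hη₂def]; linarith
      calc (ex (B ∩ closedBall x r) L).toReal ≤ g i * R + δ * R := by
            rw [hδ'def] at hη₂'; linarith
        _ = (g i + δ) * (1 + ε) * r := by rw [hRdef]; ring
  -- boundedness of g
  have hbdd : IsBoundedUnder (· ≤ ·) atTop g := by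
    refine isBoundedUnder_of_eventually_le (a := max ((dist x b₀ + R) / R) (M / R)) ?_
    filter_upwards [hEe] with i hMi
    apply max_le
    · refine le_trans ?_ (le_max_left _ _)
      rw [relEx]
      gcongr
      apply ENNReal.toReal_le_of_le_ofReal (by positivity)
      refine le_trans (ex_ball_le hb₀) ?_
      rw [edist_dist, ← ENNReal.ofReal_add dist_nonneg hR.le]
    · refine le_trans ?_ (le_max_right _ _)
      rw [relEx]
      gcongr
      exact ENNReal.toReal_le_of_le_ofReal hM.le hMi
  have hcobdd : IsCoboundedUnder (· ≥ ·) atTop g := hbdd.isCoboundedUnder_ge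
  have h1 : WW x r L B / (1 + ε) ≤ Filter.liminf g atTop := by
    apply le_of_forall_pos_le_add
    intro δ hδ
    have := le_liminf_of_le hcobdd (key δ hδ)
    linarith
  rw [div_le_iff₀ (by positivity : (0:ℝ) < 1 + ε)] at h1
  calc WW x r L B ≤ Filter.liminf g atTop * (1 + ε) := h1
    _ = (1 + ε) * Filter.liminf g atTop := mul_comm _ _
end
end

section
/- Every bounded pseudotangent set is a translate of a tangent set: if D ⊆ ℝⁿ is nonempty and bounded, A ⊆ ℝⁿ is closed with x ∈ A, and B ∈ Tan_D(A,x), then there exist C ∈ Tan(A,x) and y ∈ C ∩ closure(D) such that B = C − y. -/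
open Metric Set Filter Topology Pointwise

noncomputable section

/-- Attouch–Wets convergence of a sequence of sets to `L` (all sets containing `0`). -/
def AWT {n : ℕ} (F : ℕ → Set (EuclideanSpace ℝ (Fin n)))
    (L : Set (EuclideanSpace ℝ (Fin n))) : Prop :=
  ∀ r : ℝ, 0 < r → Filter.Tendsto (fun i => WW (0 : EuclideanSpace ℝ (Fin n)) r (F i) L)
    Filter.atTop (nhds 0)

/-- The blow-up `(A - x)/t` of a set `A` at `x` with scale `t`. -/
def blowup {n : ℕ} (A : Set (EuclideanSpace ℝ (Fin n))) (x : EuclideanSpace ℝ (Fin n))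
    (t : ℝ) : Set (EuclideanSpace ℝ (Fin n)) :=
  (fun a => t⁻¹ • (a - x)) '' A

/-- `T` is a pseudotangent set of `A` at `x` directed along `D`. -/
def IsPseudoTangentAlong {n : ℕ} (A : Set (EuclideanSpace ℝ (Fin n)))
    (x : EuclideanSpace ℝ (Fin n)) (D : Set (EuclideanSpace ℝ (Fin n)))
    (T : Set (EuclideanSpace ℝ (Fin n))) : Prop :=
  IsClosed T ∧ (0 : EuclideanSpace ℝ (Fin n)) ∈ T ∧
    ∃ (xs : ℕ → EuclideanSpace ℝ (Fin n)) (rs : ℕ → ℝ),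
      (∀ i, xs i ∈ A) ∧ (∀ i, 0 < rs i) ∧
      Filter.Tendsto xs Filter.atTop (nhds x) ∧
      Filter.Tendsto rs Filter.atTop (nhds 0) ∧
      (∀ i, (rs i)⁻¹ • (xs i - x) ∈ D) ∧
      AWT (fun i => blowup A (xs i) (rs i)) T

/-- `T` is a pseudotangent set of `A` at `x`. -/
def IsPseudoTangent {n : ℕ} (A : Set (EuclideanSpace ℝ (Fin n)))
    (x : EuclideanSpace ℝ (Fin n)) (T : Set (EuclideanSpace ℝ (Fin n))) : Prop :=
  IsPseudoTangentAlong A x Set.univ T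

/-- `T` is a tangent set of `A` at `x`. -/
def IsTangent {n : ℕ} (A : Set (EuclideanSpace ℝ (Fin n)))
    (x : EuclideanSpace ℝ (Fin n)) (T : Set (EuclideanSpace ℝ (Fin n))) : Prop :=
  IsClosed T ∧ (0 : EuclideanSpace ℝ (Fin n)) ∈ T ∧
    ∃ rs : ℕ → ℝ, (∀ i, 0 < rs i) ∧ Filter.Tendsto rs Filter.atTop (nhds 0) ∧
      AWT (fun i => blowup A x (rs i)) T

section Helpers

open Metric Set Filter Topology Pointwise

variable {n : ℕ}

lemma ex_le_iff {S T : Set (EuclideanSpace ℝ (Fin n))} {c : ENNReal} :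
    ex S T ≤ c ↔ ∀ a ∈ S, EMetric.infEdist a T ≤ c := iSup₂_le_iff

lemma infEdist_le_ex {S T : Set (EuclideanSpace ℝ (Fin n))} {a} (ha : a ∈ S) :
    EMetric.infEdist a T ≤ ex S T :=
  le_iSup₂ (f := fun a _ => EMetric.infEdist a T) a ha

lemma ex_ne_top {S T : Set (EuclideanSpace ℝ (Fin n))} (hT : T.Nonempty)
    {x : EuclideanSpace ℝ (Fin n)} {r : ℝ} : ex (S ∩ closedBall x r) T ≠ ⊤ := by
  obtain ⟨t, ht⟩ := hT
  have hle : ex (S ∩ closedBall x r) T ≤ ENNReal.ofReal r + edist x t := by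
    rw [ex_le_iff]
    rintro a ⟨-, ha⟩
    calc EMetric.infEdist a T ≤ edist a t := EMetric.infEdist_le_edist_of_mem ht
      _ ≤ edist a x + edist x t := edist_triangle _ _ _
      _ ≤ ENNReal.ofReal r + edist x t := by
          gcongr
          rw [edist_dist]
          exact ENNReal.ofReal_le_ofReal (mem_closedBall.mp ha)
  exact ne_top_of_le_ne_top
    (ENNReal.add_ne_top.mpr ⟨ENNReal.ofReal_ne_top, edist_ne_top x t⟩) hle

lemma infEdist_image_add {a v : EuclideanSpace ℝ (Fin n)} (S : Set (EuclideanSpace ℝ (Fin n))) :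
    EMetric.infEdist (a + v) ((fun b => b + v) '' S) = EMetric.infEdist a S := by
  have h : Isometry (fun b : EuclideanSpace ℝ (Fin n) => b + v) :=
    Isometry.of_dist_eq fun p q => dist_add_right p q v
  exact EMetric.infEdist_image h

lemma relEx_nonneg {x : EuclideanSpace ℝ (Fin n)} {r : ℝ} (hr : 0 ≤ r)
    {S T : Set (EuclideanSpace ℝ (Fin n))} : 0 ≤ relEx x r S T :=
  div_nonneg ENNReal.toReal_nonneg hr

lemma tendsto_relEx_left {F : ℕ → Set (EuclideanSpace ℝ (Fin n))}
    {L : Set (EuclideanSpace ℝ (Fin n))} (hAW : AWT F L) {r : ℝ} (hr : 0 < r) :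
    Tendsto (fun i => relEx 0 r (F i) L) atTop (𝓝 0) :=
  squeeze_zero (fun _ => relEx_nonneg hr.le) (fun _ => le_max_left _ _) (hAW r hr)

lemma tendsto_relEx_right {F : ℕ → Set (EuclideanSpace ℝ (Fin n))}
    {L : Set (EuclideanSpace ℝ (Fin n))} (hAW : AWT F L) {r : ℝ} (hr : 0 < r) :
    Tendsto (fun i => relEx 0 r L (F i)) atTop (𝓝 0) :=
  squeeze_zero (fun _ => relEx_nonneg hr.le) (fun _ => le_max_right _ _) (hAW r hr)

lemma toReal_ex_eq {S T : Set (EuclideanSpace ℝ (Fin n))} {r : ℝ} (hr : r ≠ 0) :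
    (ex (S ∩ closedBall 0 r) T).toReal = relEx 0 r S T * r := by
  rw [relEx, div_mul_cancel₀ _ hr]

/-- A limit of points of the approximating sets belongs to the Attouch–Wets limit. -/
lemma mem_of_AWT {F : ℕ → Set (EuclideanSpace ℝ (Fin n))}
    {L : Set (EuclideanSpace ℝ (Fin n))} (hAW : AWT F L) (hLc : IsClosed L)
    (hLne : L.Nonempty) {p : ℕ → EuclideanSpace ℝ (Fin n)} {q : EuclideanSpace ℝ (Fin n)}
    (hp : ∀ i, p i ∈ F i) (hpq : Tendsto p atTop (𝓝 q)) : q ∈ L := by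
  set r : ℝ := ‖q‖ + 1 with hrdef
  have hr : (0:ℝ) < r := by positivity
  have hball : ∀ᶠ i in atTop, p i ∈ closedBall (0 : EuclideanSpace ℝ (Fin n)) r := by
    filter_upwards [hpq.eventually (Metric.closedBall_mem_nhds q one_pos)] with i hi
    rw [mem_closedBall_zero_iff]
    calc ‖p i‖ ≤ ‖q‖ + dist (p i) q := by
          rw [dist_eq_norm]
          calc ‖p i‖ = ‖q + (p i - q)‖ := by rw [add_sub_cancel]
            _ ≤ ‖q‖ + ‖p i - q‖ := norm_add_le _ _
      _ ≤ ‖q‖ + 1 := by linarith [mem_closedBall.mp hi]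
  have hid : Tendsto (fun i => Metric.infDist (p i) L) atTop (𝓝 0) := by
    refine squeeze_zero' (g := fun i => relEx 0 r (F i) L * r)
      (Eventually.of_forall fun i => Metric.infDist_nonneg) ?_ ?_
    · filter_upwards [hball] with i hi
      have h1 : EMetric.infEdist (p i) L ≤ ex (F i ∩ closedBall 0 r) L :=
        infEdist_le_ex ⟨hp i, hi⟩
      have := ENNReal.toReal_mono (ex_ne_top hLne) h1
      rwa [toReal_ex_eq hr.ne'] at this
    · have := (tendsto_relEx_left hAW hr).mul_const r
      simpa using this
  have hsum : Tendsto (fun i => Metric.infDist (p i) L + dist q (p i)) atTop (𝓝 0) := by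
    have hd : Tendsto (fun i => dist q (p i)) atTop (𝓝 0) := by
      simpa [dist_comm] using tendsto_iff_dist_tendsto_zero.mp hpq
    simpa using hid.add hd
  have hle : Metric.infDist q L ≤ 0 :=
    ge_of_tendsto hsum (Eventually.of_forall fun i => Metric.infDist_le_infDist_add_dist)
  have : Metric.infDist q L = 0 := le_antisymm hle Metric.infDist_nonneg
  exact (hLc.mem_iff_infDist_zero hLne).mpr this

/-- Attouch–Wets convergence is stable under converging translations. -/
lemma AWT_translate {F : ℕ → Set (EuclideanSpace ℝ (Fin n))}
    {L : Set (EuclideanSpace ℝ (Fin n))} (hL0 : (0 : EuclideanSpace ℝ (Fin n)) ∈ L)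
    (hF0 : ∀ i, (0 : EuclideanSpace ℝ (Fin n)) ∈ F i) (hAW : AWT F L)
    {v : ℕ → EuclideanSpace ℝ (Fin n)} {y : EuclideanSpace ℝ (Fin n)}
    (hv : Tendsto v atTop (𝓝 y)) :
    AWT (fun i => (fun b => b + v i) '' F i) ((fun b => b + y) '' L) := by
  intro r hr
  set R : ℝ := r + ‖y‖ + 1 with hRdef
  have hR : (0:ℝ) < R := by positivity
  have hvb : ∀ᶠ i in atTop, dist (v i) y ≤ 1 := by
    filter_upwards [hv.eventually (Metric.closedBall_mem_nhds y one_pos)] with i hi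
    exact mem_closedBall.mp hi
  have hvy : Tendsto (fun i => dist (v i) y) atTop (𝓝 0) :=
    tendsto_iff_dist_tendsto_zero.mp hv
  set g1 : ℕ → ℝ := fun i => (relEx 0 R (F i) L * R + dist (v i) y) / r with hg1
  set g2 : ℕ → ℝ := fun i => (relEx 0 R L (F i) * R + dist (v i) y) / r with hg2
  have hg1t : Tendsto g1 atTop (𝓝 0) := by
    have := (((tendsto_relEx_left hAW hR).mul_const R).add hvy).div_const r
    simpa using this
  have hg2t : Tendsto g2 atTop (𝓝 0) := by
    have := (((tendsto_relEx_right hAW hR).mul_const R).add hvy).div_const r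
    simpa using this
  have hmax : Tendsto (fun i => max (g1 i) (g2 i)) atTop (𝓝 0) := by
    have := hg1t.max hg2t
    simpa using this
  refine squeeze_zero' ?_ ?_ hmax
  · exact Eventually.of_forall fun i =>
      le_trans (relEx_nonneg hr.le) (le_max_left _ _)
  · filter_upwards [hvb] with i hi
    have hb1 : relEx 0 r ((fun b => b + v i) '' F i) ((fun b => b + y) '' L) ≤ g1 i := by
      have hE : ex ((fun b => b + v i) '' F i ∩ closedBall 0 r) ((fun b => b + y) '' L)
          ≤ ex (F i ∩ closedBall 0 R) L + edist (v i) y := by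
        rw [ex_le_iff]
        rintro a' ⟨⟨a, haF, rfl⟩, hab⟩
        have hab' : ‖a + v i‖ ≤ r := mem_closedBall_zero_iff.mp hab
        have haR : a ∈ closedBall (0 : EuclideanSpace ℝ (Fin n)) R := by
          rw [mem_closedBall_zero_iff]
          have h1 : ‖a‖ ≤ ‖a + v i‖ + ‖v i‖ := by
            calc ‖a‖ = ‖a + v i - v i‖ := by rw [add_sub_cancel_right]
              _ ≤ ‖a + v i‖ + ‖v i‖ := norm_sub_le _ _
          have h2 : ‖v i‖ ≤ ‖y‖ + 1 := by
            have hd : ‖v i - y‖ ≤ 1 := by rwa [← dist_eq_norm]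
            calc ‖v i‖ = ‖v i - y + y‖ := by rw [sub_add_cancel]
              _ ≤ ‖v i - y‖ + ‖y‖ := norm_add_le _ _
              _ ≤ ‖y‖ + 1 := by linarith
          rw [hRdef]; linarith
        calc EMetric.infEdist (a + v i) ((fun b => b + y) '' L)
            ≤ edist (a + v i) (a + y) + EMetric.infEdist (a + y) ((fun b => b + y) '' L) :=
              EMetric.infEdist_le_edist_add_infEdist
          _ = edist (v i) y + EMetric.infEdist a L := by
              rw [edist_add_left, infEdist_image_add]
          _ ≤ edist (v i) y + ex (F i ∩ closedBall 0 R) L := by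
              gcongr
              exact infEdist_le_ex ⟨haF, haR⟩
          _ = _ := add_comm _ _
      have hfin : ex (F i ∩ closedBall (0 : EuclideanSpace ℝ (Fin n)) R) L + edist (v i) y ≠ ⊤ := by
        exact ENNReal.add_ne_top.mpr ⟨ex_ne_top ⟨0, hL0⟩, edist_ne_top _ _⟩
      have := ENNReal.toReal_mono hfin hE
      rw [ENNReal.toReal_add (ex_ne_top ⟨0, hL0⟩) (edist_ne_top _ _),
        toReal_ex_eq hR.ne', ← dist_edist] at this
      show (ex ((fun b => b + v i) '' F i ∩ closedBall 0 r) ((fun b => b + y) '' L)).toReal / r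
          ≤ (relEx 0 R (F i) L * R + dist (v i) y) / r
      gcongr
    have hb2 : relEx 0 r ((fun b => b + y) '' L) ((fun b => b + v i) '' F i) ≤ g2 i := by
      have hE : ex ((fun b => b + y) '' L ∩ closedBall 0 r) ((fun b => b + v i) '' F i)
          ≤ ex (L ∩ closedBall 0 R) (F i) + edist (v i) y := by
        rw [ex_le_iff]
        rintro b' ⟨⟨b, hbL, rfl⟩, hbb⟩
        have hbb' : ‖b + y‖ ≤ r := mem_closedBall_zero_iff.mp hbb
        have hbR : b ∈ closedBall (0 : EuclideanSpace ℝ (Fin n)) R := by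
          rw [mem_closedBall_zero_iff]
          have h1 : ‖b‖ ≤ ‖b + y‖ + ‖y‖ := by
            calc ‖b‖ = ‖b + y - y‖ := by rw [add_sub_cancel_right]
              _ ≤ ‖b + y‖ + ‖y‖ := norm_sub_le _ _
          rw [hRdef]; linarith
        calc EMetric.infEdist (b + y) ((fun c => c + v i) '' F i)
            ≤ edist (b + y) (b + v i) + EMetric.infEdist (b + v i) ((fun c => c + v i) '' F i) :=
              EMetric.infEdist_le_edist_add_infEdist
          _ = edist (v i) y + EMetric.infEdist b (F i) := by
              rw [edist_add_left, infEdist_image_add, edist_comm]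
          _ ≤ edist (v i) y + ex (L ∩ closedBall 0 R) (F i) := by
              gcongr
              exact infEdist_le_ex ⟨hbL, hbR⟩
          _ = _ := add_comm _ _
      have hfin : ex (L ∩ closedBall (0 : EuclideanSpace ℝ (Fin n)) R) (F i) + edist (v i) y ≠ ⊤ := by
        exact ENNReal.add_ne_top.mpr ⟨ex_ne_top ⟨0, hF0 i⟩, edist_ne_top _ _⟩
      have := ENNReal.toReal_mono hfin hE
      rw [ENNReal.toReal_add (ex_ne_top ⟨0, hF0 i⟩) (edist_ne_top _ _),
        toReal_ex_eq hR.ne', ← dist_edist] at this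
      show (ex ((fun b => b + y) '' L ∩ closedBall 0 r) ((fun b => b + v i) '' F i)).toReal / r
          ≤ (relEx 0 R L (F i) * R + dist (v i) y) / r
      gcongr
    exact max_le_max hb1 hb2

end Helpers

/-- Every bounded pseudotangent set is the translate of a tangent set. -/
theorem bounded_pseudotangent_eq_translate_tangent {n : ℕ}
    (A D : Set (EuclideanSpace ℝ (Fin n))) (hD : D.Nonempty)
    (hDb : Bornology.IsBounded D) (hAc : IsClosed A)
    (x : EuclideanSpace ℝ (Fin n)) (hx : x ∈ A)
    (B : Set (EuclideanSpace ℝ (Fin n))) (hB : IsPseudoTangentAlong A x D B) :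
    ∃ C : Set (EuclideanSpace ℝ (Fin n)), IsTangent A x C ∧
      ∃ y ∈ C ∩ closure D, B = (fun c => c - y) '' C := by
  obtain ⟨hBc, hB0, xs, rs, hxsA, hrs, hxsx, hrs0, hdD, hAW⟩ := hB
  set d : ℕ → EuclideanSpace ℝ (Fin n) := fun i => (rs i)⁻¹ • (xs i - x) with hddef
  obtain ⟨y, hyD, φ, hφ, hdy⟩ := hDb.isCompact_closure.tendsto_subseq
    (x := d) (fun i => subset_closure (hdD i))
  have hAW' : AWT (fun k => blowup A (xs (φ k)) (rs (φ k))) B := fun r hr =>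
    (hAW r hr).comp hφ.tendsto_atTop
  have hF0 : ∀ k, (0 : EuclideanSpace ℝ (Fin n)) ∈ blowup A (xs (φ k)) (rs (φ k)) :=
    fun k => ⟨xs (φ k), hxsA _, by simp⟩
  have key : ∀ k, (fun b => b + d (φ k)) '' blowup A (xs (φ k)) (rs (φ k))
      = blowup A x (rs (φ k)) := by
    intro k
    rw [blowup, blowup, Set.image_image]
    refine Set.image_congr fun a _ => ?_
    rw [hddef, ← smul_add, sub_add_sub_cancel]
  have hAWC : AWT (fun k => blowup A x (rs (φ k))) ((fun b => b + y) '' B) := by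
    have h := AWT_translate hB0 hF0 hAW' (v := fun k => d (φ k)) (y := y) hdy
    have heq : (fun k => (fun b => b + d (φ k)) '' blowup A (xs (φ k)) (rs (φ k)))
        = fun k => blowup A x (rs (φ k)) := funext key
    rwa [heq] at h
  have hCc : IsClosed ((fun b => b + y) '' B) := (Homeomorph.addRight y).isClosed_image.mpr hBc
  have hC0 : (0 : EuclideanSpace ℝ (Fin n)) ∈ (fun b => b + y) '' B := by
    refine mem_of_AWT hAWC hCc ⟨y, 0, hB0, by simp⟩ (p := fun _ => 0) ?_ tendsto_const_nhds
    intro k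
    exact ⟨x, hx, by simp⟩
  refine ⟨(fun b => b + y) '' B,
    ⟨hCc, hC0, fun k => rs (φ k), fun k => hrs _, hrs0.comp hφ.tendsto_atTop, hAWC⟩,
    y, ⟨⟨0, hB0, by simp⟩, hyD⟩, ?_⟩
  rw [Set.image_image]
  simp
end
end
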